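/- The function R(u;τ) := ∑_{ν ∈ 1/2+ℤ} (sgn(ν) − E((ν + Im(u)/Im(τ))·√(2 Im τ))) · (−1)^{ν−1/2} · e^{−πiν²τ} · e^{−2πiνu}, where E(t) = 2∫₀ᵗ e^{−πu²}du, satisfies R(u+1; τ) = −R(u; τ) for all τ in the upper half plane and u ∈ ℂ. -/

import Mathlib

open scoped BigOperators

/-- `E(t) = 2∫₀ᵗ e^{−πu²} du`. -/
noncomputable def Efun (t : ℝ) : ℝ := 2 * ∫ u in (0:ℝ)..t, Real.exp (-Real.pi * u ^ 2)

/-- Zwegers' function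
`R(u;τ) = ∑_{ν ∈ 1/2+ℤ} (sgn(ν) − E((ν + Im u / Im τ)√(2 Im τ)))(−1)^{ν−1/2} e^{−πiν²τ} e^{−2πiνu}`,
indexed by `ν = n + 1/2`, `n ∈ ℤ`. -/
noncomputable def Rfun (u τ : ℂ) : ℂ :=
  ∑' n : ℤ,
    ((Real.sign ((n : ℝ) + 1/2)
        - Efun (((n : ℝ) + 1/2 + u.im / τ.im) * Real.sqrt (2 * τ.im)) : ℝ) : ℂ)
      * (-1 : ℂ) ^ n
      * Complex.exp (-Real.pi * Complex.I * ((n : ℂ) + 1/2) ^ 2 * τ)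
      * Complex.exp (-2 * Real.pi * Complex.I * ((n : ℂ) + 1/2) * u)

/-!
Shifting `u` by `1` leaves `Im u` unchanged, so only the last factor `e^{−2πiνu}` of each
term moves, and it picks up `e^{−2πiν} = −1` because `ν ∈ 1/2 + ℤ`. The identity therefore
holds term by term, and `∑' n, -f n = -∑' n, f n` needs no summability.
-/

open Complex

theorem Complex.exp_two_pi_mul_I_mul_int_add_half (n : ℤ) :
    exp (2 * Real.pi * I * ((n : ℂ) + 1/2)) = -1 := by
  have hsplit : 2 * Real.pi * I * ((n : ℂ) + 1/2) = n * (2 * Real.pi * I) + Real.pi * I := by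
    ring
  rw [hsplit, exp_add, exp_int_mul_two_pi_mul_I, exp_pi_mul_I, one_mul]

theorem Complex.exp_neg_two_pi_mul_I_mul_int_add_half_mul_add_one (n : ℤ) (u : ℂ) :
    exp (-2 * Real.pi * I * ((n : ℂ) + 1/2) * (u + 1))
      = -exp (-2 * Real.pi * I * ((n : ℂ) + 1/2) * u) := by
  have hsplit : -2 * Real.pi * I * ((n : ℂ) + 1/2) * (u + 1)
      = -2 * Real.pi * I * ((n : ℂ) + 1/2) * u - 2 * Real.pi * I * ((n : ℂ) + 1/2) := by
    ring
  rw [hsplit, exp_sub, exp_two_pi_mul_I_mul_int_add_half, div_neg, div_one]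

theorem Rfun_add_one_general (τ u : ℂ) : Rfun (u + 1) τ = -Rfun u τ := by
  unfold Rfun
  rw [← tsum_neg]
  congr 1
  funext n
  rw [add_im, one_im, add_zero, exp_neg_two_pi_mul_I_mul_int_add_half_mul_add_one]
  ring

/-- `R(u+1; τ) = −R(u; τ)`. -/
theorem Rfun_add_one (τ u : ℂ) (hτ : 0 < τ.im) : Rfun (u + 1) τ = -Rfun u τ :=
  Rfun_add_one_general τ u
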